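/- arXiv:1703.03585 — 3 statements merged into one kernel-verified Lean document; each statement's English description precedes it below -/
import Mathlib

section
/- Let (ρ_K)_{K} be a finite family of real numbers indexed by cells of a 1D finite volume mesh with periodic boundary, satisfying the upwind discrete transport update ρ_K^{n+1} = ρ_K^n - (δt/|K|)(F_{K,right} + F_{K,left}) where each flux F_{K,σ} = |σ| ρ_σ u_{K,σ} uses the upwind value ρ_σ = ρ_K if u_{K,σ} ≥ 0 and ρ_σ = ρ_L otherwise, and where the discrete velocity is divergence-free on each cell (the sum of |σ| u_{K,σ} over the two faces of K is zero). If ρ_min ≤ ρ_K^n ≤ ρ_max for all K and the CFL-free implicit form ρ^{n+1} solves the implicit upwind scheme, then ρ_min ≤ ρ_K^{n+1} ≤ ρ_max for all K. -/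
/-!
Writing each upwind flux as `v * ρ_σ = v⁺ ρ_K - v⁻ ρ_L`, the flux balance of cell `i` becomes
`ρ'ᵢ · (div u)ᵢ + u_{i-1}⁺ (ρ'ᵢ - ρ'_{i-1}) + uᵢ⁻ (ρ'ᵢ - ρ'_{i+1})`. The divergence term vanishes,
and at a cell where `ρ'` is maximal the other two terms are nonnegative, so there `ρ'ᵢ ≤ ρᵢ ≤ ρmax`;
symmetrically at a minimum. Since the mesh is finite, these extremal cells exist.
-/

section Upwind

variable {α : Type*} [CommRing α] [LinearOrder α] [IsStrictOrderedRing α]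

theorem mul_ite_nonneg_eq_posPart_sub_negPart (v a b : α) :
    v * (if 0 ≤ v then a else b) = v⁺ * a - v⁻ * b := by
  split_ifs with hv
  · simp [posPart_eq_self.2 hv, negPart_eq_zero.2 hv]
  · have hv : v ≤ 0 := (not_le.1 hv).le
    simp [posPart_eq_zero.2 hv, negPart_eq_neg.2 hv]

theorem upwind_flux_sub_eq (v w a b c : α) :
    v * (if 0 ≤ v then b else c) - w * (if 0 ≤ w then a else b)
      = b * (v - w) + w⁺ * (b - a) + v⁻ * (b - c) := by
  rw [mul_ite_nonneg_eq_posPart_sub_negPart, mul_ite_nonneg_eq_posPart_sub_negPart]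
  linear_combination b * posPart_sub_negPart v - b * posPart_sub_negPart w

theorem upwind_flux_sub_nonneg {v w a b c : α} (hdiv : v - w = 0) (ha : a ≤ b) (hc : c ≤ b) :
    0 ≤ v * (if 0 ≤ v then b else c) - w * (if 0 ≤ w then a else b) := by
  rw [upwind_flux_sub_eq, hdiv, mul_zero, zero_add]
  exact add_nonneg (mul_nonneg (posPart_nonneg w) (sub_nonneg.2 ha))
    (mul_nonneg (negPart_nonneg v) (sub_nonneg.2 hc))

theorem upwind_flux_sub_nonpos {v w a b c : α} (hdiv : v - w = 0) (ha : b ≤ a) (hc : b ≤ c) :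
    v * (if 0 ≤ v then b else c) - w * (if 0 ≤ w then a else b) ≤ 0 := by
  rw [upwind_flux_sub_eq, hdiv, mul_zero, zero_add]
  exact add_nonpos (mul_nonpos_of_nonneg_of_nonpos (posPart_nonneg w) (sub_nonpos.2 ha))
    (mul_nonpos_of_nonneg_of_nonpos (negPart_nonneg v) (sub_nonpos.2 hc))

end Upwind

section ImplicitStep

variable {α : Type*} [Field α] [LinearOrder α] [IsStrictOrderedRing α]
  {δt V ρ ρ' F : α}

theorem implicit_step_eq (hδt : 0 < δt) (hV : 0 < V) (h : (ρ' - ρ) / δt + 1 / V * F = 0) :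
    ρ' - ρ = -(δt / V * F) := by
  field_simp at h ⊢
  linear_combination h

theorem le_of_implicit_step (hδt : 0 < δt) (hV : 0 < V) (h : (ρ' - ρ) / δt + 1 / V * F = 0)
    (hF : 0 ≤ F) : ρ' ≤ ρ := by
  have := implicit_step_eq hδt hV h
  have : 0 ≤ δt / V * F := mul_nonneg (div_pos hδt hV).le hF
  linarith

theorem le_of_implicit_step_of_nonpos (hδt : 0 < δt) (hV : 0 < V)
    (h : (ρ' - ρ) / δt + 1 / V * F = 0) (hF : F ≤ 0) : ρ ≤ ρ' := by
  have := implicit_step_eq hδt hV h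
  have : δt / V * F ≤ 0 := mul_nonpos_of_nonneg_of_nonpos (div_pos hδt hV).le hF
  linarith

end ImplicitStep

theorem le_of_forall_isMax_le {ι β : Type*} [Finite ι] [Nonempty ι] [LinearOrder β]
    {f g : ι → β} {M : β} (hg : ∀ i, g i ≤ M) (hmax : ∀ i, (∀ j, f j ≤ f i) → f i ≤ g i) (i : ι) :
    f i ≤ M := by
  obtain ⟨i₀, hi₀⟩ := Finite.exists_max f
  exact (hi₀ i).trans ((hmax i₀ hi₀).trans (hg i₀))

theorem le_of_forall_isMin_ge {ι β : Type*} [Finite ι] [Nonempty ι] [LinearOrder β]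
    {f g : ι → β} {M : β} (hg : ∀ i, M ≤ g i) (hmin : ∀ i, (∀ j, f i ≤ f j) → g i ≤ f i) (i : ι) :
    M ≤ f i :=
  le_of_forall_isMax_le (β := βᵒᵈ) hg hmin i

/-- Discrete maximum principle for the implicit upwind finite volume scheme for the
transport equation on a periodic 1D mesh with a discretely divergence-free velocity. -/
theorem implicit_upwind_max_principle
    (n : ℕ) [NeZero n]
    (δt ρmin ρmax : ℝ) (hδt : 0 < δt)
    (vol : Fin n → ℝ) (hvol : ∀ i, 0 < vol i)
    (u : Fin n → ℝ)                      -- velocity at face i (between cell i and cell i+1)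
    (hdiv : ∀ i : Fin n, u i - u (i - 1) = 0)   -- discrete divergence-free on each cell
    (ρ ρ' : Fin n → ℝ)
    (upw : Fin n → ℝ)
    (hupw : ∀ i : Fin n, upw i = if 0 ≤ u i then ρ' i else ρ' (i + 1))
    (hscheme : ∀ i : Fin n,
      (ρ' i - ρ i) / δt + (1 / vol i) * (u i * upw i - u (i - 1) * upw (i - 1)) = 0)
    (hlow : ∀ i, ρmin ≤ ρ i) (hhigh : ∀ i, ρ i ≤ ρmax) :
    ∀ i, ρmin ≤ ρ' i ∧ ρ' i ≤ ρmax := by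
  have hflux : ∀ i, u i * upw i - u (i - 1) * upw (i - 1)
      = u i * (if 0 ≤ u i then ρ' i else ρ' (i + 1))
        - u (i - 1) * (if 0 ≤ u (i - 1) then ρ' (i - 1) else ρ' i) := by
    intro i
    rw [hupw, hupw, sub_add_cancel]
  refine fun i => ⟨?_, ?_⟩
  · refine le_of_forall_isMin_ge hlow (fun j hj => ?_) i
    refine le_of_implicit_step_of_nonpos hδt (hvol j) (hscheme j) ?_
    exact hflux j ▸ upwind_flux_sub_nonpos (hdiv j) (hj _) (hj _)
  · refine le_of_forall_isMax_le hhigh (fun j hj => ?_) i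
    refine le_of_implicit_step hδt (hvol j) (hscheme j) ?_
    exact hflux j ▸ upwind_flux_sub_nonneg (hdiv j) (hj _) (hj _)
end

section
/- Let n ≥ 1 and let F : Fin n → ℝ represent antisymmetric fluxes on a periodic 1D dual mesh, i.e., the flux from dual cell i to dual cell i+1 (indices mod n) is F i, and the discrete convection operator applied to v : Fin n → ℝ at cell i is C_i(v) = F i · (v i + v (i+1))/2 - F (i-1) · (v (i-1) + v i)/2. Suppose moreover the discrete dual mass balance holds: (1/δt)(ρ'_i - ρ_i)·|D_i| + F i - F (i-1) = 0 for all i, with ρ_i, ρ'_i ≥ 0. Then for every v : Fin n → ℝ, Σ_i C_i(v)·v i + (1/(2δt)) Σ_i |D_i| (ρ'_i - ρ_i) v i² = 0. -/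
open Finset

/-- Discrete kinetic energy stability of the centered convection operator on a
periodic 1D mesh, given the discrete mass balance on dual cells. -/
theorem convection_energy_identity
    (n : ℕ) [NeZero n] (δt : ℝ) (hδt : 0 < δt)
    (D ρ ρ' F : Fin n → ℝ)
    (hD : ∀ i, 0 < D i) (hρ : ∀ i, 0 ≤ ρ i) (hρ' : ∀ i, 0 ≤ ρ' i)
    (hmass : ∀ i : Fin n, (1 / δt) * (ρ' i - ρ i) * D i + F i - F (i - 1) = 0) :
    ∀ v : Fin n → ℝ,
      (∑ i : Fin n,
          (F i * (v i + v (i + 1)) / 2 - F (i - 1) * (v (i - 1) + v i) / 2) * v i)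
        + (1 / (2 * δt)) * ∑ i : Fin n, D i * (ρ' i - ρ i) * v i ^ 2 = 0 := by
  intro v
  have key : ∀ i : Fin n, F i - F (i - 1) = -((1 / δt) * (ρ' i - ρ i) * D i) := by
    intro i; linarith [hmass i]
  have h1 : ∑ i : Fin n, F (i - 1) * (v (i - 1) + v i) / 2 * v i
      = ∑ i : Fin n, F i * (v i + v (i + 1)) / 2 * v (i + 1) := by
    apply Fintype.sum_equiv (Equiv.subRight (1 : Fin n))
    intro i
    simp
  have h2 : ∑ i : Fin n, F (i - 1) * v i ^ 2 = ∑ i : Fin n, F i * v (i + 1) ^ 2 := by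
    apply Fintype.sum_equiv (Equiv.subRight (1 : Fin n))
    intro i
    simp
  have h3 : (∑ i : Fin n,
      (F i * (v i + v (i + 1)) / 2 - F (i - 1) * (v (i - 1) + v i) / 2) * v i)
      = ∑ i : Fin n, (F i - F (i - 1)) * v i ^ 2 / 2 := by
    have e1 : (∑ i : Fin n,
        (F i * (v i + v (i + 1)) / 2 - F (i - 1) * (v (i - 1) + v i) / 2) * v i)
        = (∑ i : Fin n, F i * (v i + v (i + 1)) / 2 * v i)
          - ∑ i : Fin n, F (i - 1) * (v (i - 1) + v i) / 2 * v i := by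
      rw [← Finset.sum_sub_distrib]
      exact Finset.sum_congr rfl fun i _ => by ring
    rw [e1, h1, ← Finset.sum_sub_distrib]
    have e2 : ∑ i : Fin n,
        (F i * (v i + v (i + 1)) / 2 * v i - F i * (v i + v (i + 1)) / 2 * v (i + 1))
        = ∑ i : Fin n, (F i * v i ^ 2 / 2 - F i * v (i + 1) ^ 2 / 2) := by
      exact Finset.sum_congr rfl fun i _ => by ring
    rw [e2, Finset.sum_sub_distrib]
    have e3 : ∑ i : Fin n, F i * v (i + 1) ^ 2 / 2
        = ∑ i : Fin n, F (i - 1) * v i ^ 2 / 2 := by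
      rw [← Finset.sum_div, ← Finset.sum_div, h2]
    rw [e3, ← Finset.sum_sub_distrib]
    exact Finset.sum_congr rfl fun i _ => by ring
  rw [h3]
  have h4 : ∑ i : Fin n, (F i - F (i - 1)) * v i ^ 2 / 2
      = ∑ i : Fin n, -((1 / δt) * (ρ' i - ρ i) * D i) * v i ^ 2 / 2 := by
    exact Finset.sum_congr rfl fun i _ => by rw [key i]
  rw [h4, Finset.mul_sum, ← Finset.sum_add_distrib]
  apply Finset.sum_eq_zero
  intro i _
  have : δt ≠ 0 := ne_of_gt hδt
  field_simp
  ring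
end

section
/- Let (ρ_K)_K satisfy the primal mass balance (1/δt)(ρ_K^{n+1} - ρ_K^n) + (1/|K|) Σ_{σ ∈ faces(K)} F_{K,σ} = 0 on a periodic 1D mesh, with dual cells D_i consisting of half of cell i and half of cell i+1 (so |D_i| = (|K_i| + |K_{i+1}|)/2), dual densities ρ_{D_i} = (|K_i| ρ_i + |K_{i+1}| ρ_{i+1})/(2|D_i|), and dual fluxes F_{D_i,right} = (F_{K_i,right} + F_{K_{i+1},right})/2, F_{D_i,left} = (F_{K_i,left} + F_{K_{i+1},left})/2. Then the dual mass balance holds: (1/δt)(ρ_{D_i}^{n+1} - ρ_{D_i}^n) + (1/|D_i|)(F_{D_i,right} + F_{D_i,left}) = 0. -/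
/-- Mass conservation on dual (staggered) cells in a 1D MAC-type scheme: the primal
mass balance implies the dual mass balance. -/
theorem dual_mass_balance
    (n : ℕ) [NeZero n] (δt : ℝ) (hδt : 0 < δt)
    (vol : Fin n → ℝ) (hvol : ∀ i, 0 < vol i)
    (ρ ρ' Fr Fl Fr' Fl' : Fin n → ℝ)
    -- flux antisymmetry: the left flux of cell i is minus the right flux of cell i-1
    (hFl : ∀ i : Fin n, Fl i = - Fr (i - 1))
    (hFl' : ∀ i : Fin n, Fl' i = - Fr' (i - 1))
    -- primal mass balance on each cell
    (hmass : ∀ i : Fin n,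
      (1 / δt) * (ρ' i - ρ i) + (1 / vol i) * (Fr i + Fl i) = 0) :
    ∀ i : Fin n,
      (1 / δt) *
          ((vol i * ρ' i + vol (i + 1) * ρ' (i + 1)) / (2 * ((vol i + vol (i + 1)) / 2))
            - (vol i * ρ i + vol (i + 1) * ρ (i + 1)) / (2 * ((vol i + vol (i + 1)) / 2)))
        + (1 / ((vol i + vol (i + 1)) / 2)) *
            ((Fr i + Fr (i + 1)) / 2 + (Fl i + Fl (i + 1)) / 2) = 0 := by
  intro i
  have h1 := hmass i
  have h2 := hmass (i + 1)
  have v1 := hvol i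
  have v2 := hvol (i + 1)
  have hs : vol i + vol (i + 1) ≠ 0 := by positivity
  field_simp at h1 h2 ⊢
  nlinarith [h1, h2, mul_pos v1 v2]
end
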